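/- Let A = F_p((t)) with automorphism α(x) = tx. Let Z²_bil(A,A) denote the group of continuous, biadditive maps ω : A × A → A satisfying ω(tx, ty) = t·ω(x,y), and let B denote the set of two-sided sequences (a_m)_{m∈ℤ} in A such that a_m → 0 and t^m a_{-m} → 0 as m → ∞. Then the map b : Z²_bil(A,A) → B defined by b(ω) = (ω(t^0, t^m))_{m∈ℤ} is a group isomorphism (a bijective additive map). -/

import Mathlib

open scoped Classical

/-- The absolute value on `F_p((t))`: `|x| = p^{-N}` where `N` is the least index with
nonzero coefficient, and `|0| = 0`. -/
noncomputable def labs (p : ℕ) (x : LaurentSeries (ZMod p)) : ℝ :=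
  if x = 0 then 0 else (p : ℝ) ^ (-(HahnSeries.order x))

/-- The element `t ∈ F_p((t))`. -/
noncomputable def tVar (p : ℕ) : LaurentSeries (ZMod p) := HahnSeries.single 1 1

/-- Joint (ultrametric) continuity of a two-variable map on `F_p((t))`. -/
def LContinuous2 (p : ℕ)
    (f : LaurentSeries (ZMod p) → LaurentSeries (ZMod p) → LaurentSeries (ZMod p)) :
    Prop :=
  ∀ x y, ∀ ε : ℝ, 0 < ε → ∃ δ : ℝ, 0 < δ ∧
    ∀ x' y', labs p (x' - x) < δ → labs p (y' - y) < δ → labs p (f x' y' - f x y) < ε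

/-- Membership in `Z²_bil(A,A)`: continuous, biadditive, equivariant maps `A × A → A`
where `A = F_p((t))` with automorphism `α(x) = tx`. -/
def IsBil (p : ℕ)
    (ω : LaurentSeries (ZMod p) → LaurentSeries (ZMod p) → LaurentSeries (ZMod p)) :
    Prop :=
  LContinuous2 p ω ∧
  (∀ x x' y, ω (x + x') y = ω x y + ω x' y) ∧
  (∀ x y y', ω x (y + y') = ω x y + ω x y') ∧
  (∀ x y, ω (tVar p * x) (tVar p * y) = tVar p * ω x y)

/-- Membership in `B`: two-sided sequences `(a_m)_{m ∈ ℤ}` in `A` with `a_m → 0` and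
`t^m a_{-m} → 0` as `m → ∞`. -/
def InB (p : ℕ) (a : ℤ → LaurentSeries (ZMod p)) : Prop :=
  Filter.Tendsto (fun m : ℕ => labs p (a m)) Filter.atTop (nhds 0) ∧
  Filter.Tendsto (fun m : ℕ => labs p ((tVar p) ^ m * a (-(m : ℤ)))) Filter.atTop (nhds 0)

/-!
Biadditivity and `t`-equivariance give `ω (c tⁿ) (d tᵐ) = c d tⁿ ω 1 tᵐ⁻ⁿ`, so `ω` is
determined by the sequence `b ω` on Laurent polynomials, hence everywhere by continuity;
continuity at `(1, 0)` and at `(0, 1)` gives the two decay conditions defining `B`, since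
`tᵐ ω 1 t⁻ᵐ = ω tᵐ 1`. Conversely, for `a ∈ B` the series `ω x y = ∑_{n,m} xₙ yₘ tⁿ a_{m-n}`
has only finitely many nonzero terms in each degree (`a_k → 0` bounds `k = m - n` above and
`t⁻ᵏ a_k → 0` bounds it below), and it is a continuous, equivariant, biadditive map with
`ω 1 tᵐ = a m`.
-/

open Filter Topology HahnSeries

section LaurentSeries

variable {R : Type*}

lemma eq_zero_of_forall_le_orderTop [Zero R] {x : LaurentSeries R}
    (h : ∀ N : ℤ, (N : WithTop ℤ) ≤ x.orderTop) : x = 0 :=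
  orderTop_eq_top.mp (WithTop.eq_top_iff_forall_ge.mpr h)

lemma single_eq_smul_single_one [Semiring R] (n : ℤ) (c : R) :
    single n c = c • (single n 1 : LaurentSeries R) := by
  ext j
  simp [coeff_single]

noncomputable def truncIco [AddCommMonoid R] (x : LaurentSeries R) (D : ℤ) : LaurentSeries R :=
  ∑ n ∈ Finset.Ico x.order D, single n (x.coeff n)

lemma le_orderTop_sub_truncIco [AddCommGroup R] (x : LaurentSeries R) (D : ℤ) :
    (D : WithTop ℤ) ≤ (x - truncIco x D).orderTop := by
  refine le_orderTop_iff_forall.mpr fun j hj => ?_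
  rw [coeff_sub, truncIco, coeff_sum, Finset.sum_eq_single j
    (fun n _ hn => coeff_single_of_ne hn.symm) ?_, coeff_single_same, sub_self]
  intro hj'
  rw [coeff_single_same]
  refine coeff_eq_zero_of_lt_order ?_
  simp only [Finset.mem_Ico, not_and, not_lt] at hj'
  have := WithTop.coe_lt_coe.mp hj
  omega

lemma le_of_le_orderTop_of_coeff_ne_zero [Zero R] {x : LaurentSeries R} {N n : ℤ}
    (hN : (N : WithTop ℤ) ≤ x.orderTop) (hn : x.coeff n ≠ 0) : N ≤ n :=
  WithTop.coe_le_coe.mp (hN.trans (orderTop_le_of_coeff_ne_zero hn))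

end LaurentSeries

section Labs

lemma one_lt_prime_cast (p : ℕ) [Fact p.Prime] : (1 : ℝ) < p := by
  exact_mod_cast (Fact.out : p.Prime).one_lt

lemma prime_zpow_pos (p : ℕ) [Fact p.Prime] (N : ℤ) : (0 : ℝ) < (p : ℝ) ^ N :=
  zpow_pos (zero_lt_one.trans (one_lt_prime_cast p)) N

lemma labs_nonneg {p : ℕ} (x : LaurentSeries (ZMod p)) : 0 ≤ labs p x := by
  unfold labs
  split_ifs
  exacts [le_rfl, zpow_nonneg (Nat.cast_nonneg p) _]

variable {p : ℕ} [Fact p.Prime]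

lemma labs_le_zpow_iff {x : LaurentSeries (ZMod p)} {N : ℤ} :
    labs p x ≤ (p : ℝ) ^ (-N) ↔ (N : WithTop ℤ) ≤ x.orderTop := by
  rcases eq_or_ne x 0 with rfl | hx
  · simp [labs, zpow_nonneg]
  · rw [labs, if_neg hx, zpow_le_zpow_iff_right₀ (one_lt_prime_cast p), neg_le_neg_iff,
      ← order_eq_orderTop_of_ne_zero hx, WithTop.coe_le_coe]

lemma labs_lt_zpow_iff {x : LaurentSeries (ZMod p)} {N : ℤ} :
    labs p x < (p : ℝ) ^ (-N) ↔ ((N + 1 : ℤ) : WithTop ℤ) ≤ x.orderTop := by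
  rcases eq_or_ne x 0 with rfl | hx
  · simp [labs, prime_zpow_pos]
  · rw [labs, if_neg hx, zpow_lt_zpow_iff_right₀ (one_lt_prime_cast p), neg_lt_neg_iff,
      ← order_eq_orderTop_of_ne_zero hx, WithTop.coe_le_coe, Int.add_one_le_iff]

lemma exists_labs_lt_of_le_orderTop {ε : ℝ} (hε : 0 < ε) :
    ∃ N : ℤ, ∀ x : LaurentSeries (ZMod p), (N : WithTop ℤ) ≤ x.orderTop → labs p x < ε := by
  obtain ⟨n, hn⟩ := exists_pow_lt_of_lt_one hε (inv_lt_one_of_one_lt₀ (one_lt_prime_cast p))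
  refine ⟨n, fun x hx => (labs_le_zpow_iff.mpr hx).trans_lt ?_⟩
  rwa [zpow_neg, zpow_natCast, ← inv_pow]

lemma tendsto_labs_zero_iff {α : Type*} {l : Filter α} {f : α → LaurentSeries (ZMod p)} :
    Tendsto (fun m => labs p (f m)) l (𝓝 0) ↔
      ∀ N : ℤ, ∀ᶠ m in l, (N : WithTop ℤ) ≤ (f m).orderTop := by
  refine ⟨fun h N => ?_, fun h => tendsto_order.2 ⟨fun b hb => ?_, fun ε hε => ?_⟩⟩
  · exact (h.eventually (ge_mem_nhds (prime_zpow_pos p (-N)))).mono fun m hm =>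
      labs_le_zpow_iff.mp hm
  · exact Eventually.of_forall fun m => hb.trans_le (labs_nonneg _)
  · obtain ⟨N, hN⟩ := exists_labs_lt_of_le_orderTop (p := p) hε
    exact (h N).mono fun m hm => hN _ hm

lemma tVar_zpow (m : ℤ) : tVar p ^ m = single m 1 := (RatFunc.single_zpow m).symm

lemma tVar_ne_zero : tVar p ≠ 0 := single_ne_zero one_ne_zero

lemma lcontinuous2_iff
    {f : LaurentSeries (ZMod p) → LaurentSeries (ZMod p) → LaurentSeries (ZMod p)} :
    LContinuous2 p f ↔ ∀ x y (N : ℤ), ∃ D : ℤ, ∀ x' y',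
      (D : WithTop ℤ) ≤ (x' - x).orderTop → (D : WithTop ℤ) ≤ (y' - y).orderTop →
        (N : WithTop ℤ) ≤ (f x' y' - f x y).orderTop := by
  constructor
  · intro h x y N
    obtain ⟨δ, hδ, hf⟩ := h x y _ (prime_zpow_pos p (-(N - 1)))
    obtain ⟨D, hD⟩ := exists_labs_lt_of_le_orderTop (p := p) hδ
    refine ⟨D, fun x' y' hx hy => ?_⟩
    simpa using labs_lt_zpow_iff.mp (hf x' y' (hD _ hx) (hD _ hy))
  · intro h x y ε hε
    obtain ⟨N, hN⟩ := exists_labs_lt_of_le_orderTop (p := p) hε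
    obtain ⟨D, hD⟩ := h x y N
    refine ⟨_, prime_zpow_pos p (-(D - 1)), fun x' y' hx hy => hN _ (hD x' y' ?_ ?_)⟩
    · simpa using labs_lt_zpow_iff.mp hx
    · simpa using labs_lt_zpow_iff.mp hy

end Labs

section IsBil

variable {p : ℕ} [Fact p.Prime]
  {ω ω' : LaurentSeries (ZMod p) → LaurentSeries (ZMod p) → LaurentSeries (ZMod p)}

lemma apply_zpow_mul_zpow_mul (ht : ∀ x y, ω (tVar p * x) (tVar p * y) = tVar p * ω x y)
    (s : ℤ) (x y : LaurentSeries (ZMod p)) :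
    ω (tVar p ^ s * x) (tVar p ^ s * y) = tVar p ^ s * ω x y := by
  induction s using Int.induction_on generalizing x y with
  | zero => simp
  | succ s ih =>
    simp only [zpow_add_one₀ (tVar_ne_zero (p := p)), mul_comm _ (tVar p), mul_assoc, ht, ih]
  | pred s ih =>
    refine mul_left_cancel₀ (tVar_ne_zero (p := p)) ?_
    have hs : tVar p * tVar p ^ (-(s : ℤ) - 1) = tVar p ^ (-(s : ℤ)) := by
      rw [← zpow_one_add₀ tVar_ne_zero, add_sub_cancel]
    rw [← ht, ← mul_assoc, ← mul_assoc, ← mul_assoc, hs, ih]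

noncomputable def IsBil.toAddMonoidHom₂ (h : IsBil p ω) :
    LaurentSeries (ZMod p) →+ LaurentSeries (ZMod p) →+ LaurentSeries (ZMod p) :=
  AddMonoidHom.mk' (fun x => AddMonoidHom.mk' (ω x) (h.2.2.1 x))
    fun x x' => AddMonoidHom.ext (h.2.1 x x')

lemma IsBil.toAddMonoidHom₂_apply (h : IsBil p ω) (x y : LaurentSeries (ZMod p)) :
    h.toAddMonoidHom₂ x y = ω x y := rfl

lemma IsBil.apply_zero_left (h : IsBil p ω) (y : LaurentSeries (ZMod p)) : ω 0 y = 0 := by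
  rw [← h.toAddMonoidHom₂_apply, map_zero, AddMonoidHom.zero_apply]

lemma IsBil.apply_zero_right (h : IsBil p ω) (x : LaurentSeries (ZMod p)) : ω x 0 = 0 := by
  rw [← h.toAddMonoidHom₂_apply, map_zero]

theorem IsBil.inB (h : IsBil p ω) : InB p (fun m : ℤ => ω 1 (tVar p ^ m)) := by
  have hcont := lcontinuous2_iff.mp h.1
  have horder (D : ℤ) (m : ℕ) (hm : D.toNat ≤ m) :
      (D : WithTop ℤ) ≤ (tVar p ^ (m : ℤ)).orderTop := by
    rw [tVar_zpow, orderTop_single one_ne_zero, WithTop.coe_le_coe]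
    omega
  refine ⟨tendsto_labs_zero_iff.mpr fun N => ?_, tendsto_labs_zero_iff.mpr fun N => ?_⟩
  · obtain ⟨D, hD⟩ := hcont 1 0 N
    filter_upwards [eventually_ge_atTop D.toNat] with m hm
    simpa [h.apply_zero_right] using hD 1 _ (by simp) (by simpa using horder D m hm)
  · obtain ⟨D, hD⟩ := hcont 0 1 N
    filter_upwards [eventually_ge_atTop D.toNat] with m hm
    have hshift : tVar p ^ m * ω 1 (tVar p ^ (-(m : ℤ))) = ω (tVar p ^ (m : ℤ)) 1 := by
      rw [← zpow_natCast, ← apply_zpow_mul_zpow_mul h.2.2.2, mul_one, ← zpow_add₀ tVar_ne_zero,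
        add_neg_cancel, zpow_zero]
    rw [hshift]
    simpa [h.apply_zero_left] using hD _ 1 (by simpa using horder D m hm) (by simp)

lemma IsBil.sub (h : IsBil p ω) (h' : IsBil p ω') : IsBil p (ω - ω') := by
  obtain ⟨hc, hl, hr, ht⟩ := h
  obtain ⟨hc', hl', hr', ht'⟩ := h'
  refine ⟨lcontinuous2_iff.mpr fun x y N => ?_, fun x x' y => ?_, fun x y y' => ?_,
    fun x y => ?_⟩
  · obtain ⟨D, hD⟩ := lcontinuous2_iff.mp hc x y N
    obtain ⟨D', hD'⟩ := lcontinuous2_iff.mp hc' x y N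
    refine ⟨max D D', fun x' y' hx hy => ?_⟩
    have hmax := WithTop.coe_le_coe.mpr (le_max_left D D')
    have hmax' := WithTop.coe_le_coe.mpr (le_max_right D D')
    have hsplit :
        (ω - ω') x' y' - (ω - ω') x y = (ω x' y' - ω x y) - (ω' x' y' - ω' x y) := by
      simp only [Pi.sub_apply]
      abel
    rw [hsplit]
    exact (le_min (hD x' y' (hmax.trans hx) (hmax.trans hy))
      (hD' x' y' (hmax'.trans hx) (hmax'.trans hy))).trans min_orderTop_le_orderTop_sub
  · simp only [Pi.sub_apply, hl, hl']
    abel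
  · simp only [Pi.sub_apply, hr, hr']
    abel
  · simp only [Pi.sub_apply, ht, ht', mul_sub]

theorem IsBil.eq_zero_of_apply_one_zpow (h : IsBil p ω)
    (h0 : ∀ m : ℤ, ω 1 (tVar p ^ m) = 0) : ω = 0 := by
  have hzpow (n m : ℤ) : ω (tVar p ^ n) (tVar p ^ m) = 0 := by
    calc ω (tVar p ^ n) (tVar p ^ m)
        _ = ω (tVar p ^ n * 1) (tVar p ^ n * tVar p ^ (m - n)) := by
          rw [mul_one, ← zpow_add₀ tVar_ne_zero, add_sub_cancel]
        _ = 0 := by rw [apply_zpow_mul_zpow_mul h.2.2.2, h0, mul_zero]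
  have hsingle (n m : ℤ) (c d : ZMod p) : ω (single n c) (single m d) = 0 := by
    rw [single_eq_smul_single_one n c, single_eq_smul_single_one m d, ← tVar_zpow, ← tVar_zpow,
      ← h.toAddMonoidHom₂_apply]
    simp only [ZMod.map_smul, AddMonoidHom.smul_apply, h.toAddMonoidHom₂_apply, hzpow, smul_zero]
  have htrunc (x y : LaurentSeries (ZMod p)) (D : ℤ) : ω (truncIco x D) (truncIco y D) = 0 := by
    simp only [truncIco, ← h.toAddMonoidHom₂_apply, map_sum, AddMonoidHom.finsetSum_apply]
    simp only [h.toAddMonoidHom₂_apply, hsingle, Finset.sum_const_zero]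
  funext x y
  refine eq_zero_of_forall_le_orderTop fun N => ?_
  obtain ⟨D, hD⟩ := lcontinuous2_iff.mp h.1 x y N
  have hx := le_orderTop_sub_truncIco x D
  have hy := le_orderTop_sub_truncIco y D
  rw [← orderTop_neg, neg_sub] at hx hy
  simpa [htrunc] using hD _ _ hx hy

end IsBil

section Cocycle

variable {R : Type*} [CommRing R] {a : ℤ → LaurentSeries R}

/-- Membership in `B` in terms of coefficients: `a k → 0` as `k → ∞` and `t⁻ᵏ a k → 0` as
`k → -∞`. -/
structure IsDecaying (a : ℤ → LaurentSeries R) : Prop where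
  atTop : ∀ N : ℤ, ∃ M : ℤ, ∀ k ≥ M, ∀ j < N, (a k).coeff j = 0
  atBot : ∀ N : ℤ, ∃ M : ℤ, ∀ k ≤ M, ∀ j < N + k, (a k).coeff j = 0

lemma IsDecaying.exists_coeff_eq_zero_of_ge (ha : IsDecaying a) (K : ℤ) :
    ∃ c : ℤ, ∀ k ≥ K, ∀ j < c, (a k).coeff j = 0 := by
  obtain ⟨M, hM⟩ := ha.atTop 0
  obtain ⟨c, hc⟩ := ((Set.finite_Icc K M).image fun k => (a k).order).bddBelow
  refine ⟨min c 0, fun k hk j hj => ?_⟩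
  by_cases hkM : k ≤ M
  · exact coeff_eq_zero_of_lt_order ((hj.trans_le (min_le_left _ _)).trans_le
      (hc ⟨k, ⟨hk, hkM⟩, rfl⟩))
  · exact hM k (by omega) j (by omega)

lemma IsDecaying.exists_lowerBound (ha : IsDecaying a) (Nx Ny : ℤ) :
    ∃ B : ℤ, ∀ n m j : ℤ, Nx ≤ n → Ny ≤ m → n + j < B → (a (m - n)).coeff j = 0 := by
  obtain ⟨M, hM⟩ := ha.atBot 0
  obtain ⟨c, hc⟩ := ha.exists_coeff_eq_zero_of_ge M
  refine ⟨min Ny (Nx + c), fun n m j hn hm hj => ?_⟩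
  rcases le_total (m - n) M with h | h
  · exact hM (m - n) h j (by omega)
  · exact hc (m - n) h j (by omega)

lemma IsDecaying.finite_setOf_coeff_ne_zero (ha : IsDecaying a) (Nx Ny N : ℤ) :
    {q : ℤ × ℤ | Nx ≤ q.1 ∧ Ny ≤ q.2 ∧
      ∃ j, q.1 + j < N ∧ (a (q.2 - q.1)).coeff j ≠ 0}.Finite := by
  obtain ⟨M₁, hM₁⟩ := ha.atTop (N - Nx)
  obtain ⟨M₂, hM₂⟩ := ha.atBot (N - Ny)
  obtain ⟨c, hc⟩ := ha.exists_coeff_eq_zero_of_ge M₂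
  refine ((Set.finite_Icc Nx (N - c)).prod (Set.finite_Icc Ny (N - c + M₁))).subset ?_
  rintro ⟨n, m⟩ ⟨hn, hm, j, hj, hne⟩
  have hk₁ : m - n < M₁ := by
    by_contra! h
    exact hne (hM₁ (m - n) h j (by omega))
  have hk₂ : M₂ < m - n := by
    by_contra! h
    exact hne (hM₂ (m - n) h j (by omega))
  have hcj : c ≤ j := by
    by_contra! h
    exact hne (hc (m - n) hk₂.le j h)
  exact ⟨⟨hn, by omega⟩, ⟨hm, by omega⟩⟩

lemma IsDecaying.exists_coeff_eq_zero_of_le_or_le (ha : IsDecaying a) (Nx Ny N : ℤ) :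
    ∃ D : ℤ, ∀ n m j : ℤ, Nx ≤ n → Ny ≤ m → n + j < N → (D ≤ n ∨ D ≤ m) →
      (a (m - n)).coeff j = 0 := by
  obtain ⟨⟨D₁, D₂⟩, hD⟩ := (ha.finite_setOf_coeff_ne_zero Nx Ny N).bddAbove
  refine ⟨max D₁ D₂ + 1, fun n m j hn hm hj hnm => ?_⟩
  by_contra hne
  have : (n, m) ≤ (D₁, D₂) := hD ⟨hn, hm, j, hj, hne⟩
  rw [Prod.mk_le_mk] at this
  omega

/-- The `r`-th coefficient of `∑_{n,m} xₙ yₘ tⁿ a_{m-n}`. -/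
noncomputable def cocycleCoeff (a : ℤ → LaurentSeries R) (x y : LaurentSeries R) (r : ℤ) : R :=
  ∑ᶠ q : ℤ × ℤ, x.coeff q.1 * y.coeff q.2 * (a (q.2 - q.1)).coeff (r - q.1)

lemma cocycleCoeff_eq_zero {x y : LaurentSeries R} {r : ℤ}
    (h : ∀ n m, x.coeff n ≠ 0 → y.coeff m ≠ 0 → (a (m - n)).coeff (r - n) = 0) :
    cocycleCoeff a x y r = 0 := by
  refine finsum_eq_zero_of_forall_eq_zero fun q => ?_
  by_cases hx : x.coeff q.1 = 0
  · simp [hx]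
  by_cases hy : y.coeff q.2 = 0
  · simp [hy]
  simp [h q.1 q.2 hx hy]

lemma IsDecaying.finite_support_cocycleCoeff (ha : IsDecaying a) (x y : LaurentSeries R)
    (r : ℤ) :
    (Function.support fun q : ℤ × ℤ =>
      x.coeff q.1 * y.coeff q.2 * (a (q.2 - q.1)).coeff (r - q.1)).Finite := by
  refine (ha.finite_setOf_coeff_ne_zero x.order y.order (r + 1)).subset fun q hq => ?_
  have hxy := left_ne_zero_of_mul hq
  exact ⟨order_le_of_coeff_ne_zero (left_ne_zero_of_mul hxy),
    order_le_of_coeff_ne_zero (right_ne_zero_of_mul hxy), r - q.1, by omega,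
    right_ne_zero_of_mul hq⟩

lemma IsDecaying.cocycleCoeff_add_left (ha : IsDecaying a) (x x' y : LaurentSeries R) (r : ℤ) :
    cocycleCoeff a (x + x') y r = cocycleCoeff a x y r + cocycleCoeff a x' y r := by
  rw [cocycleCoeff, cocycleCoeff, cocycleCoeff, ← finsum_add_distrib
    (ha.finite_support_cocycleCoeff x y r) (ha.finite_support_cocycleCoeff x' y r)]
  simp only [coeff_add, add_mul]

lemma IsDecaying.cocycleCoeff_add_right (ha : IsDecaying a) (x y y' : LaurentSeries R) (r : ℤ) :
    cocycleCoeff a x (y + y') r = cocycleCoeff a x y r + cocycleCoeff a x y' r := by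
  rw [cocycleCoeff, cocycleCoeff, cocycleCoeff, ← finsum_add_distrib
    (ha.finite_support_cocycleCoeff x y r) (ha.finite_support_cocycleCoeff x y' r)]
  simp only [coeff_add, mul_add, add_mul]

lemma IsDecaying.bddBelow_support_cocycleCoeff (ha : IsDecaying a) (x y : LaurentSeries R) :
    BddBelow (Function.support (cocycleCoeff a x y)) := by
  obtain ⟨B, hB⟩ := ha.exists_lowerBound x.order y.order
  refine ⟨B, fun r hr => ?_⟩
  by_contra! hrB
  exact hr (cocycleCoeff_eq_zero fun n m hn hm =>
    hB n m _ (order_le_of_coeff_ne_zero hn) (order_le_of_coeff_ne_zero hm) (by omega))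

noncomputable def IsDecaying.cocycle (ha : IsDecaying a) (x y : LaurentSeries R) :
    LaurentSeries R where
  coeff := cocycleCoeff a x y
  isPWO_support' := Set.IsWF.isPWO (ha.bddBelow_support_cocycleCoeff x y).wellFoundedOn_lt

@[simp]
lemma IsDecaying.coeff_cocycle (ha : IsDecaying a) (x y : LaurentSeries R) (r : ℤ) :
    (ha.cocycle x y).coeff r = cocycleCoeff a x y r := rfl

lemma IsDecaying.cocycle_add_left (ha : IsDecaying a) (x x' y : LaurentSeries R) :
    ha.cocycle (x + x') y = ha.cocycle x y + ha.cocycle x' y := by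
  ext r
  simp [ha.cocycleCoeff_add_left]

lemma IsDecaying.cocycle_add_right (ha : IsDecaying a) (x y y' : LaurentSeries R) :
    ha.cocycle x (y + y') = ha.cocycle x y + ha.cocycle x y' := by
  ext r
  simp [ha.cocycleCoeff_add_right]

lemma IsDecaying.cocycle_single_one_mul (ha : IsDecaying a) (x y : LaurentSeries R) :
    ha.cocycle (single 1 1 * x) (single 1 1 * y) = single 1 1 * ha.cocycle x y := by
  ext r
  rw [coeff_single_mul, one_mul, coeff_cocycle, coeff_cocycle, cocycleCoeff, cocycleCoeff,
    ← finsum_comp_equiv (Equiv.addRight ((1, 1) : ℤ × ℤ))]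
  refine finsum_congr fun q => ?_
  simp only [Equiv.coe_addRight, Prod.fst_add, Prod.snd_add, coeff_single_mul, one_mul,
    add_sub_cancel_right, add_sub_add_right_eq_sub]
  ring_nf

lemma IsDecaying.cocycle_one_single (ha : IsDecaying a) (m : ℤ) :
    ha.cocycle 1 (single m 1) = a m := by
  ext r
  rw [coeff_cocycle, cocycleCoeff, finsum_eq_single _ (0, m)]
  · simp
  rintro ⟨n, m'⟩ hq
  by_cases hn : n = 0
  · subst hn
    simp [coeff_single_of_ne (show m' ≠ m by rintro rfl; exact hq rfl)]
  · simp [coeff_one, hn]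

lemma IsDecaying.exists_le_orderTop_cocycle (ha : IsDecaying a) (Nx Ny N : ℤ) :
    ∃ D : ℤ, ∀ u v : LaurentSeries R, (Nx : WithTop ℤ) ≤ u.orderTop →
      (Ny : WithTop ℤ) ≤ v.orderTop →
      ((D : WithTop ℤ) ≤ u.orderTop ∨ (D : WithTop ℤ) ≤ v.orderTop) →
        (N : WithTop ℤ) ≤ (ha.cocycle u v).orderTop := by
  obtain ⟨D, hD⟩ := ha.exists_coeff_eq_zero_of_le_or_le Nx Ny N
  refine ⟨D, fun u v hu hv huv => le_orderTop_iff_forall.mpr fun r hr =>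
    cocycleCoeff_eq_zero fun n m hn hm => ?_⟩
  have hr' := WithTop.coe_lt_coe.mp hr
  exact hD n m _ (le_of_le_orderTop_of_coeff_ne_zero hu hn)
    (le_of_le_orderTop_of_coeff_ne_zero hv hm) (by omega)
    (huv.imp (le_of_le_orderTop_of_coeff_ne_zero · hn) (le_of_le_orderTop_of_coeff_ne_zero · hm))

lemma IsDecaying.continuous_cocycle (ha : IsDecaying a) (x y : LaurentSeries R) (N : ℤ) :
    ∃ D : ℤ, ∀ x' y', (D : WithTop ℤ) ≤ (x' - x).orderTop →
      (D : WithTop ℤ) ≤ (y' - y).orderTop →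
        (N : WithTop ℤ) ≤ (ha.cocycle x' y' - ha.cocycle x y).orderTop := by
  have hlow (z : LaurentSeries R) : ((min z.order 0 : ℤ) : WithTop ℤ) ≤ z.orderTop :=
    le_orderTop_iff_forall.mpr fun j hj =>
      coeff_eq_zero_of_lt_order ((WithTop.coe_lt_coe.mp hj).trans_le (min_le_left _ _))
  obtain ⟨D, hD⟩ := ha.exists_le_orderTop_cocycle (min x.order 0) (min y.order 0) N
  refine ⟨max D 0, fun x' y' hx hy => ?_⟩
  have below {b : ℤ} {z : LaurentSeries R} (hb : b ≤ max D 0)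
      (hz : ((max D 0 : ℤ) : WithTop ℤ) ≤ z.orderTop) : (b : WithTop ℤ) ≤ z.orderTop :=
    (WithTop.coe_le_coe.mpr hb).trans hz
  have hxD := below (le_max_left D 0) hx
  have hyD := below (le_max_left D 0) hy
  have hx0 := below ((min_le_right x.order 0).trans (le_max_right D 0)) hx
  have hy0 := below ((min_le_right y.order 0).trans (le_max_right D 0)) hy
  have hy' : ((min y.order 0 : ℤ) : WithTop ℤ) ≤ y'.orderTop := by
    rw [← sub_add_cancel y' y]
    exact (le_min hy0 (hlow y)).trans min_orderTop_le_orderTop_add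
  have hsplit : ha.cocycle x' y' - ha.cocycle x y =
      ha.cocycle (x' - x) y' + ha.cocycle x (y' - y) := by
    conv_lhs => rw [← sub_add_cancel x' x, ha.cocycle_add_left, ← sub_add_cancel y' y,
      ha.cocycle_add_right x (y' - y) y, sub_add_cancel]
    abel
  rw [hsplit]
  exact (le_min (hD _ _ hx0 hy' (.inl hxD)) (hD _ _ (hlow x) hy0 (.inr hyD))).trans
    min_orderTop_le_orderTop_add

end Cocycle

section Surjective

variable {p : ℕ} [Fact p.Prime] {a : ℤ → LaurentSeries (ZMod p)}

theorem InB.isDecaying (h : InB p a) : IsDecaying a := by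
  obtain ⟨h₁, h₂⟩ := h
  constructor
  · intro N
    obtain ⟨M, hM⟩ := eventually_atTop.mp (tendsto_labs_zero_iff.mp h₁ N)
    refine ⟨M, fun k hk j hj => ?_⟩
    obtain ⟨m, rfl⟩ := Int.eq_ofNat_of_zero_le (by omega : 0 ≤ k)
    exact le_orderTop_iff_forall.mp (hM m (by omega)) j (by exact_mod_cast hj)
  · intro N
    obtain ⟨M, hM⟩ := eventually_atTop.mp (tendsto_labs_zero_iff.mp h₂ N)
    refine ⟨-M, fun k hk j hj => ?_⟩
    obtain ⟨m, rfl⟩ : ∃ m : ℕ, k = -m := ⟨k.natAbs, by omega⟩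
    have := le_orderTop_iff_forall.mp (hM m (by omega)) (j + m)
      (by exact_mod_cast (by omega : j + m < N))
    rwa [← zpow_natCast, tVar_zpow, coeff_single_mul, one_mul, add_sub_cancel_right] at this

theorem IsDecaying.isBil_cocycle (ha : IsDecaying a) : IsBil p ha.cocycle :=
  ⟨lcontinuous2_iff.mpr ha.continuous_cocycle, ha.cocycle_add_left, ha.cocycle_add_right,
    ha.cocycle_single_one_mul⟩

lemma IsDecaying.cocycle_one_zpow (ha : IsDecaying a) (m : ℤ) :
    ha.cocycle 1 (tVar p ^ m) = a m := by
  rw [tVar_zpow, ha.cocycle_one_single]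

end Surjective

theorem stmt13_general {p : ℕ} [Fact p.Prime] :
    -- well-defined into B
    (∀ ω, IsBil p ω → InB p (fun m : ℤ => ω 1 ((tVar p) ^ m))) ∧
    -- additive
    (∀ ω₁ ω₂, IsBil p ω₁ → IsBil p ω₂ →
      (fun m : ℤ => (fun x y => ω₁ x y + ω₂ x y) 1 ((tVar p) ^ m)) =
        (fun m : ℤ => ω₁ 1 ((tVar p) ^ m)) + (fun m : ℤ => ω₂ 1 ((tVar p) ^ m))) ∧
    -- injective
    (∀ ω₁ ω₂, IsBil p ω₁ → IsBil p ω₂ →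
      (fun m : ℤ => ω₁ 1 ((tVar p) ^ m)) = (fun m : ℤ => ω₂ 1 ((tVar p) ^ m)) → ω₁ = ω₂) ∧
    -- surjective
    (∀ a : ℤ → LaurentSeries (ZMod p), InB p a →
      ∃ ω, IsBil p ω ∧ (fun m : ℤ => ω 1 ((tVar p) ^ m)) = a) := by
  refine ⟨fun ω hω => hω.inB, fun _ _ _ _ => rfl, fun ω₁ ω₂ h₁ h₂ hb => ?_, fun a ha => ?_⟩
  · exact sub_eq_zero.mp <| (h₁.sub h₂).eq_zero_of_apply_one_zpow fun m =>
      sub_eq_zero.mpr (congrFun hb m)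
  · have hdec := ha.isDecaying
    exact ⟨hdec.cocycle, hdec.isBil_cocycle, funext hdec.cocycle_one_zpow⟩

/-- The map `b : Z²_bil(A,A) → B`, `ω ↦ (ω(t⁰, t^m))_{m ∈ ℤ}`, is a
well-defined additive bijection (a group isomorphism for the pointwise additions). -/
theorem stmt13 {p : ℕ} (hp : p.Prime) [Fact p.Prime] :
    -- well-defined into B
    (∀ ω, IsBil p ω → InB p (fun m : ℤ => ω 1 ((tVar p) ^ m))) ∧
    -- additive
    (∀ ω₁ ω₂, IsBil p ω₁ → IsBil p ω₂ →
      (fun m : ℤ => (fun x y => ω₁ x y + ω₂ x y) 1 ((tVar p) ^ m)) =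
        (fun m : ℤ => ω₁ 1 ((tVar p) ^ m)) + (fun m : ℤ => ω₂ 1 ((tVar p) ^ m))) ∧
    -- injective
    (∀ ω₁ ω₂, IsBil p ω₁ → IsBil p ω₂ →
      (fun m : ℤ => ω₁ 1 ((tVar p) ^ m)) = (fun m : ℤ => ω₂ 1 ((tVar p) ^ m)) → ω₁ = ω₂) ∧
    -- surjective
    (∀ a : ℤ → LaurentSeries (ZMod p), InB p a →
      ∃ ω, IsBil p ω ∧ (fun m : ℤ => ω 1 ((tVar p) ^ m)) = a) :=
  stmt13_general
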